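/- arXiv:2109.12620 — 7 statements merged into one kernel-verified Lean document; each statement's English description precedes it below -/
import Mathlib

section
/- Let S̄ = (S_0,…,S_n) and T̄ = (T_0,…,T_n) be n-slices of the finite group G. Then the number of families (μ_i : G/S_i → G/T_i)_{0≤i≤n} of G-equivariant maps commuting with the natural projections G/S_{i-1} → G/S_i and G/T_{i-1} → G/T_i equals the mark m(S̄,T̄) = |{gT_0 ∈ G/T_0 : g⁻¹S_ig ≤ T_i for all i = 0,…,n}|. -/
variable {G : Type*}

/-- The mark `m(K̄,S̄) = |{gS₀ ∈ G/S₀ : g⁻¹Kᵢg ≤ Sᵢ for all i}|`. -/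
noncomputable def mark [Group G] {n : ℕ} (K S : Fin (n + 1) → Subgroup G) : ℕ :=
  Nat.card {x : G ⧸ S 0 //
    ∃ g : G, QuotientGroup.mk g = x ∧ ∀ i, ∀ k ∈ K i, g⁻¹ * k * g ∈ S i}

/-- Natural projection `G/H → G/K` for `H ≤ K`. -/
def cosetProj [Group G] {H K : Subgroup G} (h : H ≤ K) : G ⧸ H → G ⧸ K :=
  Quotient.map' id fun a b hab => by
    rw [QuotientGroup.leftRel_apply] at hab ⊢
    exact h hab

/-!
An equivariant map `μ : G/H → G/K` is determined by `μ(H) = gK`, and `gK` occurs as such a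
value exactly when `g⁻¹Hg ≤ K`, the map then being `aH ↦ agK`. In a family `(μᵢ)` commuting
with the projections, every `μᵢ(Sᵢ)` is the image of `μ₀(S₀)`, so `μ ↦ μ₀(S₀)` is a bijection
onto the cosets `gT₀` with `g⁻¹Sᵢg ≤ Tᵢ` for all `i`.
-/

section
variable [Group G] {H K L : Subgroup G}

@[simp]
lemma cosetProj_mk (h : H ≤ K) (a : G) : cosetProj h (a : G ⧸ H) = (a : G ⧸ K) := rfl

lemma cosetProj_cosetProj (h₁ : H ≤ K) (h₂ : K ≤ L) (x : G ⧸ H) :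
    cosetProj h₂ (cosetProj h₁ x) = cosetProj (h₁.trans h₂) x := by
  induction x using QuotientGroup.induction_on with | H a => rfl

lemma eq_of_equivariant_of_apply_one_eq {X : Type*} [MulAction G X] {f f' : G ⧸ H → X}
    (hf : ∀ (g : G) y, f (g • y) = g • f y) (hf' : ∀ (g : G) y, f' (g • y) = g • f' y)
    (h1 : f (1 : G) = f' (1 : G)) : f = f' := by
  funext y
  induction y using QuotientGroup.induction_on with | H a => ?_
  have ha : (a : G ⧸ H) = a • ((1 : G) : G ⧸ H) := by
    rw [MulAction.Quotient.smul_mk, smul_eq_mul, mul_one]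
  rw [ha, hf, hf', h1]

lemma conj_mem_of_equivariant_of_apply_one_eq {f : G ⧸ H → G ⧸ K}
    (hf : ∀ (g : G) y, f (g • y) = g • f y) {g : G} (hg : f (1 : G) = g) {h : G} (hh : h ∈ H) : g⁻¹ * h * g ∈ K := by
  have hfix : h • ((1 : G) : G ⧸ H) = (1 : G) := by
    rw [MulAction.Quotient.smul_mk, smul_eq_mul, mul_one, QuotientGroup.eq, mul_one]
    exact inv_mem hh
  have hgh : ((g : G) : G ⧸ K) = (h * g : G) := by
    rw [← smul_eq_mul, ← MulAction.Quotient.smul_mk, ← hg, ← hf, hfix, hg]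
  rw [mul_assoc]
  exact QuotientGroup.eq.mp hgh

def rightMulMap (g : G) (hg : ∀ h ∈ H, g⁻¹ * h * g ∈ K) : G ⧸ H → G ⧸ K :=
  Quotient.map' (· * g) fun a b hab => by
    rw [QuotientGroup.leftRel_apply] at hab ⊢
    simpa [mul_assoc] using hg _ hab

variable {g : G}

@[simp]
lemma rightMulMap_mk (hg : ∀ h ∈ H, g⁻¹ * h * g ∈ K) (a : G) :
    rightMulMap g hg (a : G ⧸ H) = (a * g : G) := rfl

lemma rightMulMap_smul (hg : ∀ h ∈ H, g⁻¹ * h * g ∈ K) (a : G) (y : G ⧸ H) :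
    rightMulMap g hg (a • y) = a • rightMulMap g hg y := by
  induction y using QuotientGroup.induction_on with | H b =>
  simp only [MulAction.Quotient.smul_mk, rightMulMap_mk, smul_eq_mul, mul_assoc]

lemma rightMulMap_comp_cosetProj {H' K' : Subgroup G} (hH : H ≤ H') (hK : K ≤ K')
    (hg : ∀ h ∈ H, g⁻¹ * h * g ∈ K) (hg' : ∀ h ∈ H', g⁻¹ * h * g ∈ K') :
    rightMulMap g hg' ∘ cosetProj hH = cosetProj hK ∘ rightMulMap g hg := by
  funext y
  induction y using QuotientGroup.induction_on with | H b => rfl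

end

lemma apply_one_eq_cosetProj_apply_one [Group G] {n : ℕ} {S T : Fin (n + 1) → Subgroup G}
    (hS : Monotone S) (hT : Monotone T) (μ : ∀ i, G ⧸ S i → G ⧸ T i)
    (hμ : ∀ i : Fin n,
      μ i.succ ∘ cosetProj (hS (Fin.castSucc_lt_succ : i.castSucc < i.succ).le) =
        cosetProj (hT (Fin.castSucc_lt_succ : i.castSucc < i.succ).le) ∘ μ i.castSucc)
    (i : Fin (n + 1)) :
    μ i (1 : G) = cosetProj (hT (Fin.zero_le i)) (μ 0 (1 : G)) := by
  induction i using Fin.induction with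
  | zero =>
    induction μ 0 (1 : G) using QuotientGroup.induction_on with | H a => rfl
  | succ i ih =>
    have h := congrFun (hμ i) (1 : G)
    simp only [Function.comp_apply, cosetProj_mk] at h
    rw [h, ih, cosetProj_cosetProj]

theorem card_hom_eq_mark_general {n : ℕ} [Group G]
    (S T : Fin (n + 1) → Subgroup G) (hS : Monotone S) (hT : Monotone T) :
    Nat.card {μ : ∀ i : Fin (n + 1), G ⧸ S i → G ⧸ T i //
        (∀ (i : Fin (n + 1)) (g : G) (y : G ⧸ S i), μ i (g • y) = g • μ i y) ∧
        ∀ i : Fin n,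
          μ i.succ ∘ cosetProj (hS (Fin.castSucc_lt_succ : i.castSucc < i.succ).le) =
            cosetProj (hT (Fin.castSucc_lt_succ : i.castSucc < i.succ).le) ∘ μ i.castSucc} =
      mark S T := by
  refine Nat.card_eq_of_bijective (fun μ => ⟨μ.1 0 (1 : G), ?_⟩) ⟨?_, ?_⟩
  · obtain ⟨μ, hsmul, hproj⟩ := μ
    obtain ⟨g, hg⟩ := QuotientGroup.mk_surjective (μ 0 (1 : G))
    refine ⟨g, hg, fun i h hh => conj_mem_of_equivariant_of_apply_one_eq (hsmul i) ?_ hh⟩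
    rw [apply_one_eq_cosetProj_apply_one hS hT μ hproj i, ← hg, cosetProj_mk]
  · rintro ⟨μ, hμ, hμproj⟩ ⟨ν, hν, hνproj⟩ h
    have h0 : μ 0 (1 : G) = ν 0 (1 : G) := congrArg Subtype.val h
    refine Subtype.ext (funext fun i => eq_of_equivariant_of_apply_one_eq (hμ i) (hν i) ?_)
    dsimp only
    rw [apply_one_eq_cosetProj_apply_one hS hT μ hμproj, h0,
      ← apply_one_eq_cosetProj_apply_one hS hT ν hνproj]
  · rintro ⟨x, g, rfl, hg⟩
    refine ⟨⟨fun i => rightMulMap g (hg i), fun i => rightMulMap_smul (hg i),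
      fun i => rightMulMap_comp_cosetProj _ _ (hg _) (hg _)⟩, ?_⟩
    exact Subtype.ext (congrArg QuotientGroup.mk (one_mul g))

/-- the number of families `(μᵢ : G/Sᵢ → G/Tᵢ)` of `G`-equivariant maps
commuting with the natural projections equals the mark
`m(S̄,T̄) = |{gT₀ ∈ G/T₀ : g⁻¹Sᵢg ≤ Tᵢ for all i}|`. -/
theorem card_hom_eq_mark {n : ℕ} [Group G] [Finite G]
    (S T : Fin (n + 1) → Subgroup G) (hS : Monotone S) (hT : Monotone T) :
    Nat.card {μ : ∀ i : Fin (n + 1), G ⧸ S i → G ⧸ T i //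
        (∀ (i : Fin (n + 1)) (g : G) (y : G ⧸ S i), μ i (g • y) = g • μ i y) ∧
        ∀ i : Fin n,
          μ i.succ ∘ cosetProj (hS (Fin.castSucc_lt_succ : i.castSucc < i.succ).le) =
            cosetProj (hT (Fin.castSucc_lt_succ : i.castSucc < i.succ).le) ∘ μ i.castSucc} =
      mark S T :=
  card_hom_eq_mark_general S T hS hT
end

section
/- Let p be a prime, S̄ = (S_0,…,S_n) an n-slice of the finite group G, and P a p-subgroup of N_G(S̄) = ⋂_{i=0}^n N_G(S_i). Let PS̄ denote the n-slice (PS_0,…,PS_n). Then for every chain of finite G-sets X of length n, φ_{S̄}(X) ≡ φ_{PS̄}(X) (mod p). -/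
variable {G : Type*}

/-- Composite map `X₀ → Xᵢ` of a chain of `G`-sets. -/
def chainComp (X : ℕ → Type) (f : ∀ i, X i → X (i + 1)) : ∀ i, X 0 → X i
  | 0 => id
  | i + 1 => f i ∘ chainComp X f i

/-- The invariant set `Inv_{S̄}(X)`. -/
def sliceInv [Group G] {n : ℕ} (S : Fin (n + 1) → Subgroup G)
    (X : ℕ → Type) [∀ i, MulAction G (X i)] (f : ∀ i, X i → X (i + 1)) :
    Set (X 0) :=
  {x | ∀ i : Fin (n + 1), ∀ s ∈ S i, s • chainComp X f i x = chainComp X f i x}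

/-- `φ_{S̄}(X) = |Inv_{S̄}(X)|`. -/
noncomputable def phiSlice [Group G] {n : ℕ} (S : Fin (n + 1) → Subgroup G)
    (X : ℕ → Type) [∀ i, MulAction G (X i)] (f : ∀ i, X i → X (i + 1)) : ℕ :=
  Nat.card (sliceInv S X f)

/-- The normalizer `N_G(S̄) = ⋂ᵢ N_G(Sᵢ)` of a slice. -/
def sliceNormalizer [Group G] {n : ℕ} (S : Fin (n + 1) → Subgroup G) : Subgroup G :=
  ⨅ i, Subgroup.normalizer (S i : Set G)

/-!
Since `P` normalizes every `Sᵢ`, it acts on `Inv_{S̄}(X)`, and the fixed points of this action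
are exactly `Inv_{PS̄}(X)`: a point of `X₀` fixed by `P` has all its images fixed by `P`, by
equivariance. The congruence is then the fixed-point congruence for `p`-group actions.
-/

open MulAction

section

variable [Group G] (X : ℕ → Type) [∀ i, MulAction G (X i)] (f : ∀ i, X i → X (i + 1))
  (hf : ∀ (i : ℕ) (g : G) (x : X i), f i (g • x) = g • f i x)
include hf

theorem chainComp_smul (i : ℕ) (g : G) (x : X 0) :
    chainComp X f i (g • x) = g • chainComp X f i x := by
  induction i with
  | zero => rfl
  | succ i ih => simp only [chainComp, Function.comp_apply, ih, hf]

variable {n : ℕ} (S : Fin (n + 1) → Subgroup G)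

theorem smul_mem_sliceInv {g : G} (hg : g ∈ sliceNormalizer S) {x : X 0}
    (hx : x ∈ sliceInv S X f) : g • x ∈ sliceInv S X f := by
  intro i s hs
  have hgN : g ∈ Subgroup.normalizer (S i : Set G) := Subgroup.mem_iInf.mp hg i
  have hconj : g⁻¹ * s * g ∈ S i := by
    simpa only [inv_inv] using (Subgroup.mem_normalizer_iff.mp (inv_mem hgN) s).mp hs
  calc s • chainComp X f i (g • x)
      = g • (g⁻¹ * s * g) • chainComp X f i x := by
        simp only [chainComp_smul X f hf, smul_smul, mul_assoc, mul_inv_cancel_left]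
    _ = chainComp X f i (g • x) := by rw [hx i _ hconj, chainComp_smul X f hf]

def sliceInvSubMulAction (H : Subgroup G) (hH : H ≤ sliceNormalizer S) :
    SubMulAction H (X 0) where
  carrier := sliceInv S X f
  smul_mem' h _ hx := smul_mem_sliceInv X f hf S (hH h.2) hx

theorem sliceInv_sup (H : Subgroup G) :
    sliceInv (fun i => H ⊔ S i) X f = sliceInv S X f ∩ fixedPoints H (X 0) := by
  ext x
  simp only [sliceInv, Set.mem_ofPred_eq, Set.mem_inter_iff, mem_fixedPoints, Subtype.forall,
    Subgroup.mk_smul]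
  constructor
  · intro hx
    exact ⟨fun i s hs => hx i s (le_sup_right (a := H) hs),
      fun h hh => hx 0 h (le_sup_left (b := S 0) hh)⟩
  · rintro ⟨hS, hH⟩ i
    have hstab : H ⊔ S i ≤ stabilizer G (chainComp X f i x) := by
      refine sup_le (fun h hh => ?_) (fun s hs => hS i s hs)
      rw [mem_stabilizer_iff, ← chainComp_smul X f hf, hH h hh]
    exact fun s hs => hstab hs

theorem card_fixedPoints_sliceInvSubMulAction (H : Subgroup G) (hH : H ≤ sliceNormalizer S) :
    Nat.card (fixedPoints H (sliceInvSubMulAction X f hf S H hH)) =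
      phiSlice (fun i => H ⊔ S i) X f := by
  rw [phiSlice, sliceInv_sup X f hf]
  refine Nat.card_congr ((Equiv.subtypeEquivRight fun a => ?_).trans
    (Equiv.subtypeSubtypeEquivSubtypeInter (· ∈ sliceInv S X f) (· ∈ fixedPoints H (X 0))))
  simp only [mem_fixedPoints, Subtype.ext_iff, SubMulAction.val_smul]

end

theorem phi_congr_pSubgroup_general {n : ℕ} [Group G]
    (p : ℕ) (hp : p.Prime)
    (S : Fin (n + 1) → Subgroup G)
    (P : Subgroup G) (hP : IsPGroup p P) (hPN : P ≤ sliceNormalizer S)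
    (X : ℕ → Type) [∀ i, Fintype (X i)] [∀ i, MulAction G (X i)]
    (f : ∀ i, X i → X (i + 1))
    (hf : ∀ (i : ℕ) (g : G) (x : X i), f i (g • x) = g • f i x) :
    phiSlice S X f ≡ phiSlice (fun i => P ⊔ S i) X f [MOD p] := by
  have := Fact.mk hp
  rw [← card_fixedPoints_sliceInvSubMulAction X f hf S P hPN]
  exact hP.card_modEq_card_fixedPoints (sliceInvSubMulAction X f hf S P hPN)

/-- if `p` is a prime, `S̄` an `n`-slice and `P` a `p`-subgroup of
`N_G(S̄)`, then `φ_{S̄}(X) ≡ φ_{PS̄}(X) (mod p)` for every chain of finite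
`G`-sets `X` of length `n`. -/
theorem phi_congr_pSubgroup {n : ℕ} [Group G] [Finite G]
    (p : ℕ) (hp : p.Prime)
    (S : Fin (n + 1) → Subgroup G) (hS : Monotone S)
    (P : Subgroup G) (hP : IsPGroup p P) (hPN : P ≤ sliceNormalizer S)
    (X : ℕ → Type) [∀ i, Fintype (X i)] [∀ i, MulAction G (X i)]
    (f : ∀ i, X i → X (i + 1))
    (hf : ∀ (i : ℕ) (g : G) (x : X i), f i (g • x) = g • f i x) :
    phiSlice S X f ≡ phiSlice (fun i => P ⊔ S i) X f [MOD p] :=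
  phi_congr_pSubgroup_general p hp S P hP hPN X f hf
end

section
/- Let S̄ = (S_0,…,S_n) and T̄ = (T_0,…,T_n) be n-slices of the finite group G. Then the index [N_G(S̄) : S_0] divides the mark m(T̄,S̄) = |{gS_0 ∈ G/S_0 : g⁻¹T_ig ≤ S_i for all i}|. Moreover m(S̄,S̄) = [N_G(S̄) : S_0]. -/
variable {G : Type*}

/-- The index `[N_G(S̄) : S₀]`. -/
noncomputable def sliceIndex [Group G] {n : ℕ} (S : Fin (n + 1) → Subgroup G) : ℕ :=
  (S 0).relIndex (sliceNormalizer S)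

/-!
The transporter `A = {g : g⁻¹Tᵢg ≤ Sᵢ for all i}` is stable under right multiplication by
`N_G(S̄)`, so it is a union of left cosets of `N_G(S̄)`, and a fortiori of `S₀ ≤ N_G(S̄)`.
Counting `A` in both ways gives `|S₀| · m(T̄,S̄) = |A| = |N_G(S̄)| · k = |S₀| · [N_G(S̄) : S₀] · k`.
For `T̄ = S̄` the transporter is `N_G(S̄)` itself, whence `k = 1`.
-/

open scoped Pointwise in
lemma Subgroup.card_eq_card_mul_card_image_mk [Group G] (H : Subgroup G) {A : Set G}
    (hA : ∀ g ∈ A, ∀ h ∈ H, g * h ∈ A) :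
    Nat.card A = Nat.card H * Nat.card ((↑) '' A : Set (G ⧸ H)) := by
  have hAH : A * (H : Set G) = A :=
    (Set.mul_subset_iff.2 hA).antisymm (Set.subset_mul_left A H.one_mem)
  rw [← H.card_mul_eq_card_subgroup_mul_card_quotient A, hAH]

section Slice

variable [Group G] {n : ℕ}

def sliceTransporter (T S : Fin (n + 1) → Subgroup G) : Set G :=
  {g | ∀ i, ∀ k ∈ T i, g⁻¹ * k * g ∈ S i}

lemma mark_eq_card_image_sliceTransporter (T S : Fin (n + 1) → Subgroup G) :
    mark T S = Nat.card ((↑) '' sliceTransporter T S : Set (G ⧸ S 0)) :=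
  Nat.card_congr <| Equiv.subtypeEquivRight fun _ ↦ exists_congr fun _ ↦ and_comm

lemma mem_sliceNormalizer_iff {S : Fin (n + 1) → Subgroup G} {g : G} :
    g ∈ sliceNormalizer S ↔ ∀ i, g ∈ Subgroup.normalizer (S i : Set G) :=
  Subgroup.mem_iInf

lemma le_sliceNormalizer {S : Fin (n + 1) → Subgroup G} (hS : Monotone S) :
    S 0 ≤ sliceNormalizer S :=
  le_iInf fun i ↦ (hS (Fin.zero_le i)).trans Subgroup.le_normalizer

lemma mul_mem_sliceTransporter {T S : Fin (n + 1) → Subgroup G} {g h : G}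
    (hg : g ∈ sliceTransporter T S) (hh : h ∈ sliceNormalizer S) :
    g * h ∈ sliceTransporter T S := by
  intro i k hk
  rw [show (g * h)⁻¹ * k * (g * h) = h⁻¹ * (g⁻¹ * k * g) * h by group]
  exact (Subgroup.mem_normalizer_iff''.1 (mem_sliceNormalizer_iff.1 hh i) _).1 (hg i k hk)

lemma sliceTransporter_self [Finite G] (S : Fin (n + 1) → Subgroup G) :
    sliceTransporter S S = sliceNormalizer S := by
  ext g
  refine ⟨fun hg ↦ mem_sliceNormalizer_iff.2 fun i ↦ ?_,
    fun hg i k hk ↦ (Subgroup.mem_normalizer_iff''.1 (mem_sliceNormalizer_iff.1 hg i) k).1 hk⟩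
  -- in a finite group, `g⁻¹ Sᵢ g ⊆ Sᵢ` already forces `g` to normalize `Sᵢ`
  refine inv_mem_iff.1 (Subgroup.mem_normalizer_fintype fun k hk ↦ ?_)
  simpa using hg i k hk

lemma card_sliceNormalizer {S : Fin (n + 1) → Subgroup G} (hS : Monotone S) :
    Nat.card (sliceNormalizer S) = Nat.card (S 0) * sliceIndex S := by
  rw [← Subgroup.relIndex_bot_left, ← Subgroup.relIndex_bot_left, sliceIndex,
    Subgroup.relIndex_mul_relIndex ⊥ _ _ bot_le (le_sliceNormalizer hS)]

lemma card_sliceTransporter {S : Fin (n + 1) → Subgroup G} (hS : Monotone S)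
    (T : Fin (n + 1) → Subgroup G) :
    Nat.card (sliceTransporter T S) = Nat.card (S 0) * mark T S := by
  rw [mark_eq_card_image_sliceTransporter]
  exact (S 0).card_eq_card_mul_card_image_mk fun _ hg _ hh ↦
    mul_mem_sliceTransporter hg (le_sliceNormalizer hS hh)

end Slice

theorem sliceIndex_dvd_mark_general {n : ℕ} [Group G] [Finite G]
    (S T : Fin (n + 1) → Subgroup G) (hS : Monotone S) :
    sliceIndex S ∣ mark T S ∧ mark S S = sliceIndex S := by
  have hS₀ : 0 < Nat.card (S 0) := Nat.card_pos
  constructor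
  · have hA := (sliceNormalizer S).card_eq_card_mul_card_image_mk
      (A := sliceTransporter T S) fun _ hg _ hh ↦ mul_mem_sliceTransporter hg hh
    rw [card_sliceTransporter hS, card_sliceNormalizer hS, mul_assoc] at hA
    exact ⟨_, Nat.eq_of_mul_eq_mul_left hS₀ hA⟩
  · refine Nat.eq_of_mul_eq_mul_left hS₀ ?_
    rw [← card_sliceTransporter hS, ← card_sliceNormalizer hS, sliceTransporter_self]
    rfl

/-- `[N_G(S̄) : S₀]` divides the mark `m(T̄,S̄)`, and
`m(S̄,S̄) = [N_G(S̄) : S₀]`. -/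
theorem sliceIndex_dvd_mark {n : ℕ} [Group G] [Finite G]
    (S T : Fin (n + 1) → Subgroup G) (hS : Monotone S) (hT : Monotone T) :
    sliceIndex S ∣ mark T S ∧ mark S S = sliceIndex S :=
  sliceIndex_dvd_mark_general S T hS
end

section
/- Let S̄, T̄, K̄ be n-slices of the finite group G. For g ∈ G let S̄ ∩ ᵍT̄ denote the n-slice (S_0 ∩ gT_0g⁻¹, …, S_n ∩ gT_ng⁻¹). Then m(K̄,S̄)·m(K̄,T̄) = Σ_{g ∈ [S_0\G/T_0]} m(K̄, S̄ ∩ ᵍT̄), where the sum is over a set of representatives of the double cosets S_0\G/T_0 (the summand depends only on the double coset S_0gT_0, since m is invariant under conjugation of its second argument). -/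
variable {G : Type*}

/-- The conjugate slice `ᵍS̄ = (gS₀g⁻¹, …, gSₙg⁻¹)`. -/
def sliceConj [Group G] {n : ℕ} (g : G) (S : Fin (n + 1) → Subgroup G) :
    Fin (n + 1) → Subgroup G :=
  fun i => (S i).map (MulAut.conj g).toMonoidHom

/-!
The pairs `(aS₀, bT₀)` of cosets fall into `G`-orbits indexed by the double cosets `S₀ r T₀`, and
the orbit of `(S₀, rT₀)` is `G ⧸ (S₀ ∩ ʳT₀)` via `c ↦ (cS₀, crT₀)`. Under this bijection a coset
`c(S₀ ∩ ʳT₀)` is marked by `K̄` for `S̄ ∩ ʳT̄` exactly when `cS₀` is marked for `S̄` and `crT₀` for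
`T̄`, because `ᶜ(S̄ ∩ ʳT̄) = ᶜS̄ ∩ ᶜʳT̄`. Counting both sides gives the formula.
-/

open Function

theorem Nat.card_subtype_sigma {ι : Type*} [Fintype ι] {β : ι → Type*} [∀ i, Finite (β i)]
    (P : ∀ i, β i → Prop) :
    Nat.card {p : Σ i, β i // P p.1 p.2} = ∑ i, Nat.card {b // P i b} := by
  rw [← Nat.card_sigma]
  exact Nat.card_congr
    { toFun := fun p => ⟨p.1.1, p.1.2, p.2⟩
      invFun := fun p => ⟨⟨p.1, p.2.1⟩, p.2.2⟩
      left_inv := fun _ => rfl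
      right_inv := fun _ => rfl }

section Conj

variable [Group G]

theorem Subgroup.mem_map_conj {L : Subgroup G} {g x : G} :
    x ∈ L.map (MulAut.conj g).toMonoidHom ↔ g⁻¹ * x * g ∈ L := by
  rw [Subgroup.mem_map_equiv]
  simp [mul_assoc]

theorem Subgroup.map_conj_mul (L : Subgroup G) (g h : G) :
    L.map (MulAut.conj (g * h)).toMonoidHom =
      (L.map (MulAut.conj h).toMonoidHom).map (MulAut.conj g).toMonoidHom := by
  rw [Subgroup.map_map, map_mul]
  rfl

end Conj

section Slice

variable [Group G] {n : ℕ}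

theorem sliceConj_mul (g h : G) (S : Fin (n + 1) → Subgroup G) :
    sliceConj (g * h) S = sliceConj g (sliceConj h S) :=
  funext fun i => (S i).map_conj_mul g h

theorem sliceConj_inf (g : G) (S T : Fin (n + 1) → Subgroup G) :
    sliceConj g (S ⊓ T) = sliceConj g S ⊓ sliceConj g T :=
  funext fun i => Subgroup.map_inf_eq (S i) (T i) _ (MulAut.conj g).injective

theorem sliceConj_mul_of_mem {S : Fin (n + 1) → Subgroup G} (hS : Monotone S) (g : G) {s : G}
    (hs : s ∈ S 0) : sliceConj (g * s) S = sliceConj g S := by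
  rw [sliceConj_mul]
  congr 1
  exact funext fun i => Subgroup.conj_smul_eq_self_of_mem (hS (Fin.zero_le i) hs)

theorem Monotone.sliceConj {S : Fin (n + 1) → Subgroup G} (hS : Monotone S) (g : G) :
    Monotone (sliceConj g S) :=
  fun _ _ hij => Subgroup.map_mono (hS hij)

theorem le_sliceConj_iff {K S : Fin (n + 1) → Subgroup G} {g : G} :
    K ≤ sliceConj g S ↔ ∀ i, ∀ k ∈ K i, g⁻¹ * k * g ∈ S i := by
  simp only [Pi.le_def, SetLike.le_def, sliceConj, Subgroup.mem_map_conj]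

def markedCosets (K S : Fin (n + 1) → Subgroup G) : Set (G ⧸ S 0) :=
  {x | ∃ g : G, (g : G ⧸ S 0) = x ∧ K ≤ sliceConj g S}

theorem mark_eq_card_markedCosets (K S : Fin (n + 1) → Subgroup G) :
    mark K S = Nat.card (markedCosets K S) := by
  simp only [mark, markedCosets, le_sliceConj_iff]
  rfl

theorem mk_mem_markedCosets {K S : Fin (n + 1) → Subgroup G} (hS : Monotone S) {g : G} :
    (g : G ⧸ S 0) ∈ markedCosets K S ↔ K ≤ sliceConj g S := by
  refine ⟨?_, fun hg => ⟨g, rfl, hg⟩⟩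
  rintro ⟨a, hag, ha⟩
  obtain ⟨s, hs, rfl⟩ : ∃ s ∈ S 0, g = a * s :=
    ⟨a⁻¹ * g, QuotientGroup.eq.mp hag, by group⟩
  rwa [sliceConj_mul_of_mem hS a hs]

end Slice

section Mackey

variable [Group G] (H L : Subgroup G) {ι : Type*} (r : ι → G)

def mackeyMap : (Σ i, G ⧸ (H ⊓ L.map (MulAut.conj (r i)).toMonoidHom)) → (G ⧸ H) × (G ⧸ L) :=
  fun p => (Subgroup.quotientMapOfLE inf_le_left p.2,
    Quotient.map' (· * r p.1) (fun a b hab => by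
      rw [QuotientGroup.leftRel_apply] at hab ⊢
      have hab := Subgroup.mem_map_conj.mp (Subgroup.mem_inf.mp hab).2
      rwa [show (a * r p.1)⁻¹ * (b * r p.1) = (r p.1)⁻¹ * (a⁻¹ * b) * r p.1 by group]) p.2)

theorem mackeyMap_mk (i : ι) (c : G) :
    mackeyMap H L r ⟨i, QuotientGroup.mk c⟩ = ((c : G ⧸ H), ((c * r i : G) : G ⧸ L)) :=
  rfl

variable {H L r}

theorem mackeyMap_injective
    (hr : ∀ i j, r j ∈ DoubleCoset.doubleCoset (r i) (H : Set G) L → i = j) :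
    Injective (mackeyMap H L r) := by
  rintro ⟨i, x⟩ ⟨j, y⟩ h
  induction x using QuotientGroup.induction_on with | H a => ?_
  induction y using QuotientGroup.induction_on with | H b => ?_
  simp only [mackeyMap_mk, Prod.mk.injEq, QuotientGroup.eq] at h
  obtain ⟨hH, hL⟩ := h
  obtain rfl : i = j := hr i j <| DoubleCoset.mem_doubleCoset.mpr
    ⟨(a⁻¹ * b)⁻¹, H.inv_mem hH, (a * r i)⁻¹ * (b * r j), hL, by group⟩
  refine congrArg (Sigma.mk i) (QuotientGroup.eq.mpr ⟨hH, Subgroup.mem_map_conj.mpr ?_⟩)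
  rwa [show (r i)⁻¹ * (a⁻¹ * b) * r i = (a * r i)⁻¹ * (b * r i) by group]

theorem mackeyMap_surjective (hr : ∀ g : G, ∃ i, r i ∈ DoubleCoset.doubleCoset g (H : Set G) L) :
    Surjective (mackeyMap H L r) := by
  rintro ⟨x, y⟩
  induction x using QuotientGroup.induction_on with | H a => ?_
  induction y using QuotientGroup.induction_on with | H b => ?_
  obtain ⟨i, hi⟩ := hr (a⁻¹ * b)
  obtain ⟨s, hs, t, ht, hst⟩ := DoubleCoset.mem_doubleCoset.mp hi
  refine ⟨⟨i, ((a * s⁻¹ : G) : G ⧸ _)⟩, ?_⟩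
  rw [mackeyMap_mk, Prod.mk.injEq, QuotientGroup.eq, QuotientGroup.eq, hst]
  constructor
  · simpa using hs
  · simpa [mul_assoc] using ht

end Mackey

theorem mackeyMap_mem_markedCosets_prod_iff {n : ℕ} [Group G] {S T : Fin (n + 1) → Subgroup G}
    (hS : Monotone S) (hT : Monotone T) (K : Fin (n + 1) → Subgroup G) {ι : Type*} (r : ι → G)
    (p : Σ i, G ⧸ (S ⊓ sliceConj (r i) T) 0) :
    p.2 ∈ markedCosets K (S ⊓ sliceConj (r p.1) T) ↔
      mackeyMap (S 0) (T 0) r p ∈ markedCosets K S ×ˢ markedCosets K T := by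
  obtain ⟨i, x⟩ := p
  induction x using QuotientGroup.induction_on with | H c => ?_
  change (c : G ⧸ (S ⊓ sliceConj (r i) T) 0) ∈ _ ↔
    ((c : G ⧸ S 0), ((c * r i : G) : G ⧸ T 0)) ∈ _
  rw [Set.prodMk_mem_set_prod_eq, mk_mem_markedCosets hS, mk_mem_markedCosets hT,
    mk_mem_markedCosets (hS.inf (hT.sliceConj (r i))), sliceConj_inf, sliceConj_mul, le_inf_iff]

theorem mark_mul_mark_general {n : ℕ} [Group G] [Finite G]
    (S T K : Fin (n + 1) → Subgroup G)
    (hS : Monotone S) (hT : Monotone T)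
    (R : Finset G)
    (hR : ∀ g : G, ∃! r : G, r ∈ R ∧ r ∈ DoubleCoset.doubleCoset g (S 0 : Set G) (T 0 : Set G)) :
    mark K S * mark K T =
      ∑ g ∈ R, mark K (fun i : Fin (n + 1) => S i ⊓ sliceConj g T i) := by
  have hmackey : Bijective (mackeyMap (S 0) (T 0) ((↑) : R → G)) := by
    refine ⟨mackeyMap_injective fun r r' hr'r => Subtype.ext ?_,
      mackeyMap_surjective fun g => ?_⟩
    · exact (hR r).unique ⟨r.2, DoubleCoset.mem_doubleCoset_self _ _ (r : G)⟩ ⟨r'.2, hr'r⟩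
    · obtain ⟨r, ⟨hr, hgr⟩, -⟩ := hR g
      exact ⟨⟨r, hr⟩, hgr⟩
  calc mark K S * mark K T
      = Nat.card (markedCosets K S ×ˢ markedCosets K T) := by
        rw [Nat.card_congr (Equiv.Set.prod _ _), Nat.card_prod, mark_eq_card_markedCosets,
          mark_eq_card_markedCosets]
    _ = Nat.card {p : Σ r : R, G ⧸ (S ⊓ sliceConj r T) 0 //
          p.2 ∈ markedCosets K (S ⊓ sliceConj p.1 T)} :=
        (Nat.card_congr ((Equiv.ofBijective _ hmackey).subtypeEquiv
          (mackeyMap_mem_markedCosets_prod_iff hS hT K _))).symm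
    _ = ∑ r : R, mark K (S ⊓ sliceConj r T) := by
        simp only [mark_eq_card_markedCosets]
        exact Nat.card_subtype_sigma fun (r : R) x =>
          x ∈ markedCosets K (S ⊓ sliceConj (r : G) T)
    _ = _ := Finset.sum_coe_sort R fun g => mark K (S ⊓ sliceConj g T)

/-- `m(K̄,S̄)·m(K̄,T̄) = Σ_{g ∈ [S₀\G/T₀]} m(K̄, S̄ ∩ ᵍT̄)`, the sum
being over a set of representatives of the double cosets `S₀\G/T₀`. -/
theorem mark_mul_mark {n : ℕ} [Group G] [Finite G]
    (S T K : Fin (n + 1) → Subgroup G)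
    (hS : Monotone S) (hT : Monotone T) (hK : Monotone K)
    (R : Finset G)
    (hR : ∀ g : G, ∃! r : G, r ∈ R ∧ r ∈ DoubleCoset.doubleCoset g (S 0 : Set G) (T 0 : Set G)) :
    mark K S * mark K T =
      ∑ g ∈ R, mark K (fun i : Fin (n + 1) => S i ⊓ sliceConj g T i) :=
  mark_mul_mark_general S T K hS hT R hR
end

section
/- Let [Π_n(G)] be a set of representatives of the conjugacy classes of n-slices of the finite group G. The family of vectors {v_{S̄} : S̄ ∈ [Π_n(G)]} in ∏_{T̄ ∈ [Π_n(G)]} ℤ, where v_{S̄} has T̄-coordinate m(T̄,S̄), is linearly independent over ℤ; equivalently, the square matrix (m(T̄,S̄))_{T̄,S̄ ∈ [Π_n(G)]} is invertible over ℚ, so that the vectors v_{S̄} form a ℚ-basis of ∏_{T̄ ∈ [Π_n(G)]} ℚ. -/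
open scoped Classical

variable {G : Type*}

section aux
variable [Group G] [Finite G] {n : ℕ}

lemma mark_self_pos (S : Fin (n + 1) → Subgroup G) : 0 < mark S S := by
  have : Nonempty {x : G ⧸ S 0 //
      ∃ g : G, QuotientGroup.mk g = x ∧ ∀ i, ∀ k ∈ S i, g⁻¹ * k * g ∈ S i} :=
    ⟨⟨QuotientGroup.mk 1, 1, rfl, fun i k hk => by simpa using hk⟩⟩
  exact Nat.card_pos

lemma mark_ne_zero (K S : Fin (n + 1) → Subgroup G) (h : mark K S ≠ 0) :
    ∃ g : G, ∀ i, ∀ k ∈ K i, g⁻¹ * k * g ∈ S i := by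
  have := (Nat.card_ne_zero.mp h).1
  obtain ⟨x, g, _, hg⟩ := this
  exact ⟨g, hg⟩

lemma sliceConj_one (S : Fin (n + 1) → Subgroup G) : sliceConj (1 : G) S = S := by
  funext i
  ext x
  simp [sliceConj]

lemma card_conj (g : G) (H : Subgroup G) :
    Nat.card (H.map (MulAut.conj g).toMonoidHom) = Nat.card H :=
  (Nat.card_congr (H.equivMapOfInjective _ (MulAut.conj g).injective).toEquiv).symm

-- if ∀ k ∈ K, g⁻¹kg ∈ S then card K ≤ card S
lemma card_le_of_conj_le {g : G} {K S : Subgroup G}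
    (h : ∀ k ∈ K, g⁻¹ * k * g ∈ S) : Nat.card K ≤ Nat.card S := by
  have hle : K.map (MulAut.conj g⁻¹).toMonoidHom ≤ S := by
    rintro x ⟨k, hk, rfl⟩
    simpa [mul_assoc] using h k hk
  calc Nat.card K = Nat.card (K.map (MulAut.conj g⁻¹).toMonoidHom) := (card_conj _ _).symm
    _ ≤ Nat.card S := Subgroup.card_le_of_le hle

lemma conj_eq_of_card_eq {g : G} {K S : Subgroup G}
    (h : ∀ k ∈ K, g⁻¹ * k * g ∈ S) (hc : Nat.card K = Nat.card S) :
    S.map (MulAut.conj g).toMonoidHom = K := by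
  have hle : K.map (MulAut.conj g⁻¹).toMonoidHom ≤ S := by
    rintro x ⟨k, hk, rfl⟩
    simpa [mul_assoc] using h k hk
  have heq : K.map (MulAut.conj g⁻¹).toMonoidHom = S :=
    Subgroup.eq_of_le_of_card_ge hle (by rw [card_conj]; exact hc.ge)
  rw [← heq]
  ext x
  constructor
  · rintro ⟨y, ⟨k, hk, rfl⟩, rfl⟩
    simpa [mul_assoc] using hk
  · intro hx
    refine ⟨g⁻¹ * x * g, ⟨x, hx, by simp [mul_assoc]⟩, ?_⟩
    simp [mul_assoc]

end aux

/-- over a set `R` of representatives of the conjugacy classes of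
`n`-slices, the vectors `v_{S̄} = (m(T̄,S̄))_{T̄}` are linearly independent over
`ℤ`, and the matrix of marks is invertible over `ℚ`. -/
theorem marks_linearIndependent {n : ℕ} [Group G] [Finite G]
    (R : Finset {S : Fin (n + 1) → Subgroup G // Monotone S})
    (hR : ∀ S : {S : Fin (n + 1) → Subgroup G // Monotone S},
      ∃! T, T ∈ R ∧ ∃ g : G, sliceConj g S.1 = T.1) :
    LinearIndependent ℤ (fun S : R => fun T : R => (mark T.1.1 S.1.1 : ℤ)) ∧
    IsUnit (Matrix.of (fun T S : R => (mark T.1.1 S.1.1 : ℚ))).det := by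
  set M : Matrix R R ℚ := Matrix.of (fun T S : R => (mark T.1.1 S.1.1 : ℚ)) with hM
  set b : R → ℕ := fun S => ∑ i, Nat.card (S.1.1 i) with hb
  -- key: nonzero mark implies b T ≤ b S
  have key : ∀ T S : R, mark T.1.1 S.1.1 ≠ 0 → ∀ i, Nat.card (T.1.1 i) ≤ Nat.card (S.1.1 i) := by
    intro T S h i
    obtain ⟨g, hg⟩ := mark_ne_zero _ _ h
    exact card_le_of_conj_le (hg i)
  -- equality case: b T = b S and nonzero mark implies T = S
  have keq : ∀ T S : R, mark T.1.1 S.1.1 ≠ 0 → b T = b S → T = S := by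
    intro T S h hbe
    obtain ⟨g, hg⟩ := mark_ne_zero _ _ h
    have hcard : ∀ i ∈ Finset.univ, Nat.card (T.1.1 i) = Nat.card (S.1.1 i) :=
      (Finset.sum_eq_sum_iff_of_le (fun i _ => card_le_of_conj_le (hg i))).mp hbe
    have hconj : sliceConj g S.1.1 = T.1.1 := by
      funext i
      exact conj_eq_of_card_eq (hg i) (hcard i (Finset.mem_univ i))
    obtain ⟨U, _, hU⟩ := hR S.1
    have h1 : T.1 = U := hU T.1 ⟨T.2, g, hconj⟩
    have h2 : S.1 = U := hU S.1 ⟨S.2, 1, sliceConj_one _⟩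
    exact Subtype.ext (Subtype.ext (congrArg Subtype.val (h1.trans h2.symm)))
  have hBT : M.BlockTriangular b := by
    intro T S hlt
    by_contra h
    have hne : mark T.1.1 S.1.1 ≠ 0 := by
      intro h0; exact h (by simp [hM, h0])
    have : b T ≤ b S := Finset.sum_le_sum (fun i _ => key T S hne i)
    exact absurd this (not_le.mpr hlt)
  have hdet : M.det ≠ 0 := by
    rw [hBT.det]
    apply Finset.prod_ne_zero_iff.mpr
    intro a _
    have hdiag : M.toSquareBlock b a =
        Matrix.diagonal (fun S : {S : R // b S = a} => (mark S.1.1.1 S.1.1.1 : ℚ)) := by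
      funext T S
      by_cases hTS : T = S
      · subst hTS; simp [Matrix.toSquareBlock_def, Matrix.diagonal, hM]
      · have : (mark T.1.1.1 S.1.1.1 : ℚ) = 0 := by
          by_contra hne
          have : mark T.1.1.1 S.1.1.1 ≠ 0 := fun h0 => hne (by exact_mod_cast h0)
          exact hTS (Subtype.ext (keq T.1 S.1 this (T.2.trans S.2.symm)))
        simp [Matrix.toSquareBlock_def, Matrix.diagonal, hTS, hM] at this ⊢
        exact this
    rw [hdiag, Matrix.det_diagonal]
    apply Finset.prod_ne_zero_iff.mpr
    intro S _
    exact_mod_cast (mark_self_pos S.1.1.1).ne'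
  have hunit : IsUnit M.det := isUnit_iff_ne_zero.mpr hdet
  refine ⟨?_, hunit⟩
  -- linear independence over ℤ from ℚ
  have hcols : LinearIndependent ℚ (fun S : R => fun T : R => (mark T.1.1 S.1.1 : ℚ)) := by
    have := Matrix.linearIndependent_cols_iff_isUnit.mpr ((Matrix.isUnit_iff_isUnit_det M).mpr hunit)
    exact this
  have hQ : LinearIndependent ℤ (fun S : R => fun T : R => (mark T.1.1 S.1.1 : ℚ)) :=
    hcols.restrict_scalars (by
      intro a c h
      simpa using h)
  let f : (R → ℤ) →ₗ[ℤ] (R → ℚ) := LinearMap.compLeft (Int.castRingHom ℚ).toIntLinearMap R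
  have hcomp : f ∘ (fun S : R => fun T : R => (mark T.1.1 S.1.1 : ℤ)) =
      fun S : R => fun T : R => (mark T.1.1 S.1.1 : ℚ) := by
    funext S T
    simp [f, LinearMap.compLeft]
  exact LinearIndependent.of_comp f (by rw [hcomp]; exact hQ)
end

section
/- Let S̄ and T̄ be n-slices of the finite group G, and let W be a subgroup of N_G(T̄) = ⋂_{i=0}^n N_G(T_i). For w ∈ W let ⟨w⟩T̄ denote the n-slice (⟨w⟩T_0, …, ⟨w⟩T_n), where ⟨w⟩T_i is the subgroup of G generated by w and T_i. Then Σ_{w ∈ W} m(⟨w⟩T̄, S̄) ≡ 0 (mod |W|). -/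
variable {G : Type*}

/-! A subgroup `W ≤ N_G(T̄)` permutes, by left multiplication, the set `X` of cosets `gS₀` with
`g⁻¹T̄g ≤ S̄`. Since `S̄` is increasing, membership in `X` does not depend on the representative `g`,
and `g⁻¹wg ∈ S₀` already gives `g⁻¹wg ∈ Sᵢ` for all `i`; hence the cosets counted by `m(⟨w⟩T̄, S̄)`
are exactly the points of `X` fixed by `w`. By Burnside's lemma `Σ_{w ∈ W} |Fix_X(w)| = |W| · |X/W|`. -/

open MulAction

theorem SubMulAction.card_fixedBy {M α : Type*} [Monoid M] [MulAction M α]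
    (p : SubMulAction M α) (m : M) :
    Nat.card (fixedBy p m) = Nat.card ((p : Set α) ∩ fixedBy α m : Set α) :=
  Nat.card_congr <| (Equiv.subtypeEquivRight fun _ => Subtype.ext_iff).trans
    (Equiv.subtypeSubtypeEquivSubtypeInter (· ∈ p) fun y => m • y = y)

namespace Slice

variable [Group G] {n : ℕ}

/-- `ConjLE K S g` says `g⁻¹ K̄ g ≤ S̄`. -/
def ConjLE (K S : Fin (n + 1) → Subgroup G) (g : G) : Prop :=
  ∀ i, ∀ k ∈ K i, g⁻¹ * k * g ∈ S i

def markSet (K S : Fin (n + 1) → Subgroup G) : Set (G ⧸ S 0) :=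
  {x | ∃ g : G, (g : G ⧸ S 0) = x ∧ ConjLE K S g}

theorem mark_eq_card_markSet (K S : Fin (n + 1) → Subgroup G) :
    mark K S = Nat.card (markSet K S) :=
  rfl

variable {K S : Fin (n + 1) → Subgroup G}

theorem ConjLE.mul_right (hS : Monotone S) {g s : G} (h : ConjLE K S g) (hs : s ∈ S 0) :
    ConjLE K S (g * s) := by
  intro i k hk
  have hs' : s ∈ S i := hS (Fin.zero_le i) hs
  have : (g * s)⁻¹ * k * (g * s) = s⁻¹ * (g⁻¹ * k * g) * s := by group
  rw [this]
  exact mul_mem (mul_mem (inv_mem hs') (h i k hk)) hs'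

theorem ConjLE.mul_left {g w : G} (h : ConjLE K S g) (hw : w ∈ sliceNormalizer K) :
    ConjLE K S (w * g) := by
  intro i k hk
  have hw' : w⁻¹ ∈ Subgroup.normalizer (K i : Set G) := inv_mem (Subgroup.mem_iInf.mp hw i)
  have : (w * g)⁻¹ * k * (w * g) = g⁻¹ * (w⁻¹ * k * w⁻¹⁻¹) * g := by group
  rw [this]
  exact h i _ ((Subgroup.mem_normalizer_iff.mp hw' k).mp hk)

theorem mk_mem_markSet_iff (hS : Monotone S) (g : G) :
    (g : G ⧸ S 0) ∈ markSet K S ↔ ConjLE K S g := by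
  refine ⟨?_, fun h => ⟨g, rfl, h⟩⟩
  rintro ⟨g', hg', h⟩
  simpa using h.mul_right hS (QuotientGroup.eq.mp hg')

theorem conjLE_closure_sup_iff (hS : Monotone S) (w g : G) :
    ConjLE (fun i => Subgroup.closure {w} ⊔ K i) S g ↔ g⁻¹ * w * g ∈ S 0 ∧ ConjLE K S g := by
  refine ⟨fun h => ⟨h 0 w (Subgroup.mem_sup_left (Subgroup.mem_closure_singleton_self w)),
    fun i k hk => h i k (Subgroup.mem_sup_right hk)⟩, fun ⟨hw, h⟩ i => ?_⟩
  suffices Subgroup.closure {w} ⊔ K i ≤ (S i).comap (MulAut.conj g⁻¹).toMonoidHom by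
    intro k hk
    simpa using this hk
  refine sup_le ((Subgroup.closure_le _).mpr ?_) fun k hk => ?_
  · simpa using hS (Fin.zero_le i) hw
  · simpa using h i k hk

theorem mk_mem_fixedBy_iff (H : Subgroup G) (w g : G) :
    (g : G ⧸ H) ∈ fixedBy (G ⧸ H) w ↔ g⁻¹ * w * g ∈ H := by
  rw [mem_fixedBy, Quotient.smul_coe, smul_eq_mul, QuotientGroup.eq, ← inv_mem_iff,
    mul_inv_rev, inv_inv, mul_assoc]

theorem markSet_closure_sup (hS : Monotone S) (w : G) :
    markSet (fun i => Subgroup.closure {w} ⊔ K i) S = markSet K S ∩ fixedBy (G ⧸ S 0) w := by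
  ext x
  induction x using QuotientGroup.induction_on with
  | H g =>
    rw [Set.mem_inter_iff, mk_mem_markSet_iff hS, mk_mem_markSet_iff hS,
      conjLE_closure_sup_iff hS, mk_mem_fixedBy_iff, and_comm]

def markSetSubMulAction {W : Subgroup G} (hW : W ≤ sliceNormalizer K) :
    SubMulAction W (G ⧸ S 0) where
  carrier := markSet K S
  smul_mem' := by
    rintro w _ ⟨g, rfl, h⟩
    exact ⟨w * g, rfl, h.mul_left (hW w.2)⟩

end Slice

open Slice in
theorem sum_marks_congr_general {n : ℕ} [Group G] [Finite G]
    (S T : Fin (n + 1) → Subgroup G) (hS : Monotone S)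
    (W : Subgroup G) (hW : W ≤ sliceNormalizer T) :
    (∑ᶠ w ∈ (W : Set G),
        mark (fun i : Fin (n + 1) => Subgroup.closure {w} ⊔ T i) S) ≡ 0
      [MOD Nat.card W] := by
  classical
  have := Fintype.ofFinite G
  let X := markSetSubMulAction (S := S) hW
  have hmark (w : W) : mark (fun i => Subgroup.closure {(w : G)} ⊔ T i) S =
      Fintype.card (fixedBy X w) := by
    rw [← Nat.card_eq_fintype_card, SubMulAction.card_fixedBy, mark_eq_card_markSet,
      markSet_closure_sup hS]
    rfl
  rw [← finsum_set_coe_eq_finsum_mem, finsum_eq_sum_of_fintype, Nat.modEq_zero_iff_dvd]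
  change Nat.card W ∣ ∑ w : W, _
  rw [Fintype.sum_congr _ _ hmark, sum_card_fixedBy_eq_card_orbits_mul_card_group,
    Nat.card_eq_fintype_card]
  exact dvd_mul_left _ _

/-- for a subgroup `W ≤ N_G(T̄)`,
`Σ_{w ∈ W} m(⟨w⟩T̄, S̄) ≡ 0 (mod |W|)`, where `⟨w⟩T̄ = (⟨w⟩T₀, …, ⟨w⟩Tₙ)`. -/
theorem sum_marks_congr {n : ℕ} [Group G] [Finite G]
    (S T : Fin (n + 1) → Subgroup G) (hS : Monotone S) (hT : Monotone T)
    (W : Subgroup G) (hW : W ≤ sliceNormalizer T) :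
    (∑ᶠ w ∈ (W : Set G),
        mark (fun i : Fin (n + 1) => Subgroup.closure {w} ⊔ T i) S) ≡ 0
      [MOD Nat.card W] :=
  sum_marks_congr_general S T hS W hW
end

section
/- Let X be a finite partially ordered set and n a natural number. Let Π_n(X) denote the set of monotone (n+1)-tuples x̄ = (x_0,…,x_n) of elements of X with x_0 ≤ x_1 ≤ ⋯ ≤ x_n, partially ordered componentwise: x̄ ⪯ ȳ if and only if x_i ≤ y_i for all i. Then the Möbius function μ_Π of the poset (Π_n(X), ⪯) is given by μ_Π(x̄,ȳ) = ∏_{i=0}^n μ_X(x_i,y_i) if x_0 ≤ y_0 ≤ x_1 ≤ y_1 ≤ ⋯ ≤ x_n ≤ y_n, and μ_Π(x̄,ȳ) = 0 otherwise, where μ_X is the Möbius function of X. -/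
/-!
The Möbius function is determined by its recurrence, so it suffices that the proposed formula
`ν(x̄, ȳ)` satisfies it. For `x̄ < ȳ`, the tuples `t̄ ∈ [x̄, ȳ]` with `ν(x̄, t̄) ≠ 0` are those
interlaced with `x̄`, i.e. those with `tᵢ ∈ Sᵢ := [xᵢ, yᵢ] ∩ {s | s ≤ xⱼ for all j > i}` for every
`i`. These conditions constrain each coordinate separately and already force `t̄` to be monotone,
so the interval sum factors as `∏ᵢ ∑_{s ∈ Sᵢ} μ_X(xᵢ, s)`. At the last index `j` with `xⱼ ≠ yⱼ`
the set `Sⱼ` is the whole interval `[xⱼ, yⱼ]`, whose sum vanishes.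
-/

section Moebius

variable {P R : Type*} [PartialOrder P] [AddCommGroup R] [One R]

structure IsMoebiusFun (μ : P → P → R) : Prop where
  apply_self (x : P) : μ x x = 1
  apply_of_not_le {x y : P} : ¬x ≤ y → μ x y = 0
  finsum_Icc {x y : P} : x < y → ∑ᶠ t ∈ Set.Icc x y, μ x t = 0

namespace IsMoebiusFun

variable [Finite P] {μ ν : P → P → R}

theorem eq_neg_finsum_Ico (hμ : IsMoebiusFun μ) {x y : P} (h : x < y) :
    μ x y = -∑ᶠ t ∈ Set.Ico x y, μ x t := by
  have hsum := hμ.finsum_Icc h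
  rw [← Set.Ico_insert_right h.le,
    finsum_mem_insert _ Set.right_notMem_Ico (Set.toFinite _)] at hsum
  exact eq_neg_of_add_eq_zero_left hsum

theorem unique (hμ : IsMoebiusFun μ) (hν : IsMoebiusFun ν) : μ = ν := by
  funext x y
  induction y using WellFoundedLT.induction with
  | ind y ih =>
    by_cases hxy : x ≤ y
    · rcases hxy.eq_or_lt with rfl | hlt
      · rw [hμ.apply_self, hν.apply_self]
      · rw [hμ.eq_neg_finsum_Ico hlt, hν.eq_neg_finsum_Ico hlt]
        exact congrArg _ (finsum_mem_congr rfl fun t ht => ih t ht.2)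
    · rw [hμ.apply_of_not_le hxy, hν.apply_of_not_le hxy]

end IsMoebiusFun

end Moebius

theorem Pi.exists_lt_and_eqOn_Ioi_of_lt {ι α : Type*} [LinearOrder ι] [Finite ι]
    [PartialOrder α] {x y : ι → α} (h : x < y) :
    ∃ j, x j < y j ∧ Set.EqOn x y (Set.Ioi j) := by
  obtain ⟨i, hi⟩ : ∃ i, x i ≠ y i := Function.ne_iff.mp h.ne
  obtain ⟨j, hj, hmax⟩ := Set.exists_max_image {i | x i ≠ y i} id (Set.toFinite _) ⟨i, hi⟩
  exact ⟨j, (h.le j).lt_of_ne hj, fun k hk => by_contra fun hne => (hmax k hne).not_gt hk⟩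

section Tuple

variable {n : ℕ} {X : Type*} [PartialOrder X]

def Interlaced (x y : Fin (n + 1) → X) : Prop :=
  x ≤ y ∧ ∀ i : Fin n, y i.castSucc ≤ x i.succ

def interlacedSlot (x y : Fin (n + 1) → X) (i : Fin (n + 1)) : Set X :=
  Set.Icc (x i) (y i) ∩ lowerBounds (x '' Set.Ioi i)

theorem forall_castSucc_le_succ_iff {x t : Fin (n + 1) → X} (hx : Monotone x) :
    (∀ i : Fin n, t i.castSucc ≤ x i.succ) ↔ ∀ i j, i < j → t i ≤ x j := by
  refine ⟨fun h i j hij => ?_, fun h i => h _ _ i.castSucc_lt_succ⟩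
  have hi : i ≠ Fin.last n := Fin.ne_last_of_lt hij
  calc t i = t (i.castPred hi).castSucc := by rw [Fin.castSucc_castPred]
    _ ≤ x (i.castPred hi).succ := h _
    _ ≤ x j := hx (Fin.castSucc_lt_iff_succ_le.mp (by rwa [Fin.castSucc_castPred]))

theorem interlaced_and_le_iff {x y t : Fin (n + 1) → X} (hx : Monotone x) :
    Interlaced x t ∧ t ≤ y ↔ ∀ i, t i ∈ interlacedSlot x y i := by
  simp only [Interlaced, forall_castSucc_le_succ_iff hx, interlacedSlot, Set.mem_inter_iff,
    Set.mem_Icc, mem_lowerBounds, Set.forall_mem_image, Set.mem_Ioi, Pi.le_def]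
  grind

theorem monotone_of_forall_mem_interlacedSlot {x y t : Fin (n + 1) → X}
    (ht : ∀ i, t i ∈ interlacedSlot x y i) : Monotone t :=
  monotone_iff_forall_lt.mpr fun i j hij =>
    ((ht i).2 ⟨j, hij, rfl⟩).trans (ht j).1.1

theorem interlacedSlot_eq_Icc {x y : Fin (n + 1) → X} (hy : Monotone y) {i : Fin (n + 1)}
    (h : Set.EqOn x y (Set.Ioi i)) : interlacedSlot x y i = Set.Icc (x i) (y i) := by
  refine Set.inter_eq_left.mpr fun s hs => ?_
  rintro _ ⟨j, hij, rfl⟩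
  rw [h hij]
  exact hs.2.trans (hy hij.le)

variable {R : Type*} [CommRing R]

open Classical in
noncomputable def tupleMoebius (μ : X → X → R) (x y : {x : Fin (n + 1) → X // Monotone x}) : R :=
  if Interlaced x.1 y.1 then ∏ i, μ (x.1 i) (y.1 i) else 0

variable {μ : X → X → R} {x y : {x : Fin (n + 1) → X // Monotone x}}

theorem tupleMoebius_of_interlaced (h : Interlaced x.1 y.1) :
    tupleMoebius μ x y = ∏ i, μ (x.1 i) (y.1 i) :=
  if_pos h

theorem tupleMoebius_of_not_interlaced (h : ¬Interlaced x.1 y.1) : tupleMoebius μ x y = 0 :=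
  if_neg h

theorem interlaced_of_tupleMoebius_ne_zero (h : tupleMoebius μ x y ≠ 0) : Interlaced x.1 y.1 :=
  not_imp_comm.mp tupleMoebius_of_not_interlaced h

theorem finsum_Icc_tupleMoebius [Finite X] (x y : {x : Fin (n + 1) → X // Monotone x}) :
    ∑ᶠ t ∈ Set.Icc x y, tupleMoebius μ x t =
      ∏ i, ∑ᶠ s ∈ interlacedSlot x.1 y.1 i, μ (x.1 i) s := by
  classical
  have := Fintype.ofFinite X
  simp only [finsum_mem_eq_finite_toFinset_sum _ (Set.toFinite _)]
  rw [Finset.prod_univ_sum]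
  refine Finset.sum_bij_ne_zero (fun t _ _ => t.1) ?_ ?_ ?_ ?_
  · intro t ht hne
    rw [Set.Finite.mem_toFinset] at ht
    simpa only [Fintype.mem_piFinset, Set.Finite.mem_toFinset] using
      (interlaced_and_le_iff x.2).mp ⟨interlaced_of_tupleMoebius_ne_zero hne, ht.2⟩
  · intro a _ _ b _ _ hab
    exact Subtype.ext hab
  · intro p hp hne
    simp only [Fintype.mem_piFinset, Set.Finite.mem_toFinset] at hp
    obtain ⟨hxp, hpy⟩ := (interlaced_and_le_iff x.2).mpr hp
    refine ⟨⟨p, monotone_of_forall_mem_interlacedSlot hp⟩, ?_, ?_, rfl⟩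
    · rw [Set.Finite.mem_toFinset]
      exact ⟨hxp.1, hpy⟩
    · rwa [tupleMoebius_of_interlaced hxp]
  · intro t _ hne
    exact tupleMoebius_of_interlaced (interlaced_of_tupleMoebius_ne_zero hne)

theorem isMoebiusFun_tupleMoebius [Finite X] (h_self : ∀ a, μ a a = 1)
    (h_Icc : ∀ a b : X, a < b → ∑ᶠ s ∈ Set.Icc a b, μ a s = 0) :
    IsMoebiusFun (tupleMoebius μ : {x : Fin (n + 1) → X // Monotone x} → _ → R) where
  apply_self x := by
    rw [tupleMoebius_of_interlaced ⟨le_rfl, fun i => x.2 i.castSucc_le_succ⟩]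
    simp only [h_self, Finset.prod_const_one]
  apply_of_not_le h := tupleMoebius_of_not_interlaced fun hxy => h hxy.1
  finsum_Icc {x y} h := by
    obtain ⟨j, hj, hxy⟩ := Pi.exists_lt_and_eqOn_Ioi_of_lt (Subtype.coe_lt_coe.mpr h)
    rw [finsum_Icc_tupleMoebius]
    refine Finset.prod_eq_zero (Finset.mem_univ j) ?_
    rw [interlacedSlot_eq_Icc y.2 hxy]
    exact h_Icc _ _ hj

end Tuple

theorem moebius_of_tuple_poset_general {n : ℕ} {X : Type*} [PartialOrder X] [Fintype X]
    (μX : X → X → ℤ)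
    (hμX1 : ∀ x, μX x x = 1)
    (hμX3 : ∀ x y : X, x < y → (∑ᶠ t ∈ {t : X | x ≤ t ∧ t ≤ y}, μX x t) = 0)
    (μP : {x : Fin (n + 1) → X // Monotone x} →
      {x : Fin (n + 1) → X // Monotone x} → ℤ)
    (hμP1 : ∀ x, μP x x = 1)
    (hμP2 : ∀ x y, ¬(∀ i, x.1 i ≤ y.1 i) → μP x y = 0)
    (hμP3 : ∀ x y, (∀ i, x.1 i ≤ y.1 i) → x ≠ y →
      (∑ᶠ t ∈ {t : {x : Fin (n + 1) → X // Monotone x} |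
          (∀ i, x.1 i ≤ t.1 i) ∧ ∀ i, t.1 i ≤ y.1 i}, μP x t) = 0) :
    ∀ x y : {x : Fin (n + 1) → X // Monotone x},
      (((∀ i, x.1 i ≤ y.1 i) ∧ ∀ i : Fin n, y.1 i.castSucc ≤ x.1 i.succ) →
        μP x y = ∏ i, μX (x.1 i) (y.1 i)) ∧
      (¬((∀ i, x.1 i ≤ y.1 i) ∧ ∀ i : Fin n, y.1 i.castSucc ≤ x.1 i.succ) →
        μP x y = 0) := by
  have hP : IsMoebiusFun μP := ⟨hμP1, hμP2 _ _, fun h => hμP3 _ _ h.le h.ne⟩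
  rw [hP.unique (isMoebiusFun_tupleMoebius hμX1 hμX3)]
  exact fun x y => ⟨tupleMoebius_of_interlaced, tupleMoebius_of_not_interlaced⟩

/-- the Möbius function of the poset `Π_n(X)` of monotone
`(n+1)`-tuples in a finite poset `X`, ordered componentwise, is given by
`μ_Π(x̄,ȳ) = ∏ᵢ μ_X(xᵢ,yᵢ)` if `x₀ ≤ y₀ ≤ x₁ ≤ y₁ ≤ ⋯ ≤ xₙ ≤ yₙ`, and `0`
otherwise.  (The Möbius functions are characterized by their defining
recurrences, taken here as hypotheses.) -/
theorem moebius_of_tuple_poset {n : ℕ} {X : Type*} [PartialOrder X] [Fintype X]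
    (μX : X → X → ℤ)
    (hμX1 : ∀ x, μX x x = 1)
    (hμX2 : ∀ x y : X, ¬x ≤ y → μX x y = 0)
    (hμX3 : ∀ x y : X, x < y → (∑ᶠ t ∈ {t : X | x ≤ t ∧ t ≤ y}, μX x t) = 0)
    (μP : {x : Fin (n + 1) → X // Monotone x} →
      {x : Fin (n + 1) → X // Monotone x} → ℤ)
    (hμP1 : ∀ x, μP x x = 1)
    (hμP2 : ∀ x y, ¬(∀ i, x.1 i ≤ y.1 i) → μP x y = 0)
    (hμP3 : ∀ x y, (∀ i, x.1 i ≤ y.1 i) → x ≠ y →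
      (∑ᶠ t ∈ {t : {x : Fin (n + 1) → X // Monotone x} |
          (∀ i, x.1 i ≤ t.1 i) ∧ ∀ i, t.1 i ≤ y.1 i}, μP x t) = 0) :
    ∀ x y : {x : Fin (n + 1) → X // Monotone x},
      (((∀ i, x.1 i ≤ y.1 i) ∧ ∀ i : Fin n, y.1 i.castSucc ≤ x.1 i.succ) →
        μP x y = ∏ i, μX (x.1 i) (y.1 i)) ∧
      (¬((∀ i, x.1 i ≤ y.1 i) ∧ ∀ i : Fin n, y.1 i.castSucc ≤ x.1 i.succ) →
        μP x y = 0) :=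
  moebius_of_tuple_poset_general μX hμX1 hμX3 μP hμP1 hμP2 hμP3
end
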